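/- Let A ∈ ℝ^{n×n} with μ₂(A) < 0 and B ∈ ℝ^{n×s}. Assume 𝒱 ∈ ℝ^{n×q} and V₊ ∈ ℝ^{n×d} satisfy 𝒱ᵀ𝒱 = I_q, V₊ᵀV₊ = I_d, 𝒱ᵀV₊ = 0, the Arnoldi relation A𝒱 = 𝒱𝒯 + V₊ T₊ Eᵀ with 𝒯 = 𝒱ᵀA𝒱, T₊ ∈ ℝ^{d×d} and E ∈ ℝ^{q×d} the last d columns of I_q, and B = 𝒱 B_m with B_m = 𝒱ᵀB. Let G : ℝ → ℝ^{q×q} be continuously differentiable with G(t) symmetric for all t, Ġ(t) = 𝒯 G(t) + G(t) 𝒯ᵀ + B_m B_mᵀ and G(t₀) = 0; set X_m(t) = 𝒱 G(t) 𝒱ᵀ. Let X : ℝ → ℝ^{n×n} be differentiable with Ẋ(t) = A X(t) + X(t) Aᵀ + B Bᵀ and X(t₀) = 0. Then for all t ∈ [t₀,T_f]: ‖X(t) − X_m(t)‖ ≤ ‖T₊‖ · ( sup_{τ ∈ [t₀,t]} ‖Ḡ(τ)‖ ) · ( e^{2(t−t₀)μ₂(A)} − 1 ) / ( 2 μ₂(A)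 ), where Ḡ(τ) = Eᵀ G(τ) is the matrix of the last d rows of G(τ). -/

import Mathlib

open Matrix Set
open scoped Matrix.Norms.L2Operator

/-- The 2-logarithmic norm `μ₂(M) = (1/2)·λ_max(M + Mᵀ)` of a real square matrix: half the
largest eigenvalue of the symmetric matrix `M + Mᵀ`. -/
noncomputable def mu2 {k : ℕ} (M : Matrix (Fin k) (Fin k) ℝ) : ℝ :=
  (1 / 2) * ⨆ i, (show (M + Mᵀ).IsHermitian by
    simpa [Matrix.conjTranspose_eq_transpose_of_trivial] using
      Matrix.isHermitian_add_transpose_self M).eigenvalues i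

/-! The error `Z = X - V G Vᵀ` solves `Z' = A Z + Z Aᵀ + R` with `Z t₀ = 0`, where by the
Arnoldi relation the residual is `R = P + Pᵀ`, `P = V₊ T₊ Eᵀ G Vᵀ`. Variation of constants gives
`Z t = ∫ u in t₀..t, exp ((t - u) A) R u exp ((t - u) Aᵀ)`. Since `⟪A x, x⟫ ≤ μ₂(A) ‖x‖²`,
Grönwall's inequality applied to `‖exp (s A) x‖²` yields `‖exp (s A)‖ ≤ exp (μ₂(A) s)` for
`s ≥ 0`. As `V` and `V₊` have orthonormal, mutually orthogonal columns, `P² = 0` and `P`, `Pᵀ`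
only see the orthogonal components `Vᵀ x` and `V₊ᵀ x` of `x`, so `‖P + Pᵀ‖ ≤ ‖T₊ Eᵀ G‖`.
Integrating `‖T₊‖ ‖Eᵀ G‖ exp (2 μ₂(A) (t - u))` gives the bound. -/

open scoped RealInnerProductSpace

open scoped MatrixOrder in
theorem Matrix.IsHermitian.dotProduct_mulVec_le_iSup_eigenvalues {n : Type*} [Fintype n]
    [DecidableEq n] {S : Matrix n n ℝ} (hS : S.IsHermitian) (x : n → ℝ) :
    x ⬝ᵥ (S *ᵥ x) ≤ (⨆ i, hS.eigenvalues i) * (x ⬝ᵥ x) := by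
  have hle : S ≤ algebraMap ℝ (Matrix n n ℝ) (⨆ i, hS.eigenvalues i) := by
    refine le_algebraMap_of_spectrum_le (fun r hr => ?_) hS.isSelfAdjoint
    rw [hS.spectrum_real_eq_range_eigenvalues] at hr
    obtain ⟨i, rfl⟩ := hr
    exact le_ciSup (Finite.bddAbove_range _) i
  simpa [Algebra.algebraMap_eq_smul_one, sub_mulVec, dotProduct_sub, smul_mulVec] using
    (Matrix.le_iff.mp hle).dotProduct_mulVec_nonneg x

theorem dotProduct_mulVec_le_mu2 {k : ℕ} (M : Matrix (Fin k) (Fin k) ℝ) (x : Fin k → ℝ) :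
    x ⬝ᵥ (M *ᵥ x) ≤ mu2 M * (x ⬝ᵥ x) := by
  have := Matrix.IsHermitian.dotProduct_mulVec_le_iSup_eigenvalues
    (by simpa [conjTranspose_eq_transpose_of_trivial] using isHermitian_add_transpose_self M) x
  rw [add_mulVec, dotProduct_add, dotProduct_transpose_mulVec] at this
  rw [mu2]
  linarith

theorem ContinuousLinearMap.norm_exp_smul_le_of_inner_le {H : Type*} [NormedAddCommGroup H]
    [InnerProductSpace ℝ H] [CompleteSpace H] {L : H →L[ℝ] H} {μ : ℝ}
    (hL : ∀ x, ⟪L x, x⟫ ≤ μ * ‖x‖ ^ 2) {s : ℝ} (hs : 0 ≤ s) :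
    ‖NormedSpace.exp (s • L)‖ ≤ Real.exp (μ * s) := by
  refine ContinuousLinearMap.opNorm_le_bound _ (Real.exp_nonneg _) fun x => ?_
  set y : ℝ → H := fun u => NormedSpace.exp (u • L) x
  have hy : ∀ u, HasDerivAt y (L (y u)) u := fun u =>
    (ContinuousLinearMap.apply ℝ H x).hasFDerivAt.comp_hasDerivAt u
      (hasDerivAt_exp_smul_const' L u)
  have hy2 : ∀ u, HasDerivAt (‖y ·‖ ^ 2) (2 * ⟪y u, L (y u)⟫) u := fun u => (hy u).norm_sq
  have hgronwall := le_gronwallBound_of_liminf_deriv_right_le (ε := 0) (K := 2 * μ) (δ := ‖x‖ ^ 2)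
    (b := s) (fun u _ => (hy2 u).continuousAt.continuousWithinAt)
    (fun u _ r hr => (hy2 u).hasDerivWithinAt.liminf_right_slope_le hr)
    (by simp [y]) (fun u _ => by rw [real_inner_comm]; linarith [hL (y u)]) s ⟨hs, le_rfl⟩
  rw [gronwallBound_ε0, sub_zero] at hgronwall
  have hsq : ‖y s‖ ^ 2 ≤ (Real.exp (μ * s) * ‖x‖) ^ 2 :=
    hgronwall.trans_eq (by rw [mul_pow, ← Real.exp_nat_mul]; ring_nf)
  exact le_of_sq_le_sq hsq (by positivity)

theorem Matrix.norm_exp_smul_le {n : Type*} [Fintype n] [DecidableEq n] {A : Matrix n n ℝ} {μ : ℝ}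
    (hA : ∀ x, x ⬝ᵥ (A *ᵥ x) ≤ μ * (x ⬝ᵥ x)) {s : ℝ} (hs : 0 ≤ s) :
    ‖NormedSpace.exp (s • A)‖ ≤ Real.exp (μ * s) := by
  have hcont : Continuous (toEuclideanCLM (n := n) (𝕜 := ℝ)) :=
    LinearMap.continuous_of_finiteDimensional
      (toEuclideanCLM (n := n) (𝕜 := ℝ)).toAlgEquiv.toLinearEquiv.toLinearMap
  rw [← l2_opNorm_toEuclideanCLM, NormedSpace.map_exp_of_mem_ball (𝕂 := ℝ) _ hcont _
    (by simp [NormedSpace.expSeries_radius_eq_top]), map_smul]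
  refine ContinuousLinearMap.norm_exp_smul_le_of_inner_le (fun x => ?_) hs
  rw [real_inner_comm, inner_toEuclideanCLM, ← real_inner_self_eq_norm_sq,
    EuclideanSpace.inner_eq_star_dotProduct, star_trivial]
  exact hA x.ofLp

section L2OpNorm

variable {m n l : Type*} [Fintype m] [Fintype n] [Fintype l]

theorem Matrix.dotProduct_mulVec_mulVec (M : Matrix m n ℝ) (N : Matrix m l ℝ) (x : n → ℝ)
    (y : l → ℝ) : (M *ᵥ x) ⬝ᵥ (N *ᵥ y) = x ⬝ᵥ ((Mᵀ * N) *ᵥ y) := by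
  rw [← Matrix.mulVec_mulVec, Matrix.dotProduct_mulVec _ Mᵀ, Matrix.vecMul_transpose]

theorem EuclideanSpace.norm_toLp_sq (x : n → ℝ) :
    ‖(WithLp.toLp 2 x : EuclideanSpace ℝ n)‖ ^ 2 = x ⬝ᵥ x := by
  rw [← real_inner_self_eq_norm_sq, EuclideanSpace.inner_eq_star_dotProduct, star_trivial]

theorem Matrix.mulVec_transpose_dotProduct_self_add_le {q d : Type*} [Fintype q] [Fintype d]
    [DecidableEq q] [DecidableEq d] {V : Matrix n q ℝ} {W : Matrix n d ℝ} (hV : Vᵀ * V = 1)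
    (hW : Wᵀ * W = 1) (hVW : Vᵀ * W = 0) (x : n → ℝ) :
    (Vᵀ *ᵥ x) ⬝ᵥ (Vᵀ *ᵥ x) + (Wᵀ *ᵥ x) ⬝ᵥ (Wᵀ *ᵥ x) ≤ x ⬝ᵥ x := by
  set a := Vᵀ *ᵥ x
  set b := Wᵀ *ᵥ x
  -- `y` is the orthogonal projection of `x`, so `y ⬝ᵥ y = x ⬝ᵥ y` and hence `y ⬝ᵥ y ≤ x ⬝ᵥ x`
  set y := V *ᵥ a + W *ᵥ b
  have hWV : Wᵀ * V = 0 := by simpa using congrArg transpose hVW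
  have hyy : y ⬝ᵥ y = a ⬝ᵥ a + b ⬝ᵥ b := by
    simp only [y, add_dotProduct, dotProduct_add, dotProduct_mulVec_mulVec, hV, hW, hVW, hWV,
      one_mulVec, zero_mulVec, dotProduct_zero]
    ring
  have hxy : x ⬝ᵥ y = a ⬝ᵥ a + b ⬝ᵥ b := by
    simp only [y, dotProduct_add, dotProduct_mulVec, ← mulVec_transpose, a, b]
  have hdist := dotProduct_self_star_nonneg (x - y)
  simp only [star_trivial, sub_dotProduct, dotProduct_sub, dotProduct_comm y x] at hdist
  linarith

variable [DecidableEq n]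

theorem Matrix.mulVec_dotProduct_self_le_l2_opNorm_sq (M : Matrix m n ℝ) (x : n → ℝ) :
    (M *ᵥ x) ⬝ᵥ (M *ᵥ x) ≤ ‖M‖ ^ 2 * (x ⬝ᵥ x) := by
  rw [← EuclideanSpace.norm_toLp_sq, ← EuclideanSpace.norm_toLp_sq, ← mul_pow]
  exact pow_le_pow_left₀ (norm_nonneg _) (Matrix.l2_opNorm_mulVec M (WithLp.toLp 2 x)) 2

theorem Matrix.l2_opNorm_le_of_mulVec_dotProduct_self_le (M : Matrix m n ℝ) {c : ℝ} (hc : 0 ≤ c)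
    (h : ∀ x, (M *ᵥ x) ⬝ᵥ (M *ᵥ x) ≤ c ^ 2 * (x ⬝ᵥ x)) : ‖M‖ ≤ c := by
  rw [Matrix.l2_opNorm_def]
  refine ContinuousLinearMap.opNorm_le_bound _ hc fun x => le_of_sq_le_sq ?_ (by positivity)
  have := h x.ofLp
  rw [← EuclideanSpace.norm_toLp_sq, ← EuclideanSpace.norm_toLp_sq] at this
  simpa [mul_pow, Matrix.toLpLin_apply] using this

theorem Matrix.l2_opNorm_add_transpose_le {q d : Type*} [Fintype q] [Fintype d]
    [DecidableEq q] [DecidableEq d] {V : Matrix n q ℝ} {W : Matrix n d ℝ}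
    (hV : Vᵀ * V = 1) (hW : Wᵀ * W = 1) (hVW : Vᵀ * W = 0) (C : Matrix d q ℝ) :
    ‖W * C * Vᵀ + (W * C * Vᵀ)ᵀ‖ ≤ ‖C‖ := by
  set P := W * C * Vᵀ
  refine l2_opNorm_le_of_mulVec_dotProduct_self_le _ (norm_nonneg C) fun x => ?_
  set a := Vᵀ *ᵥ x
  set b := Wᵀ *ᵥ x
  have hP : (P *ᵥ x) ⬝ᵥ (P *ᵥ x) = (C *ᵥ a) ⬝ᵥ (C *ᵥ a) := by
    rw [show P *ᵥ x = W *ᵥ (C *ᵥ a) by simp [P, a, mulVec_mulVec, Matrix.mul_assoc],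
      dotProduct_mulVec_mulVec, hW, one_mulVec]
  have hPt : (Pᵀ *ᵥ x) ⬝ᵥ (Pᵀ *ᵥ x) = (Cᵀ *ᵥ b) ⬝ᵥ (Cᵀ *ᵥ b) := by
    rw [show Pᵀ *ᵥ x = V *ᵥ (Cᵀ *ᵥ b) by
        simp [P, b, transpose_mul, mulVec_mulVec, Matrix.mul_assoc],
      dotProduct_mulVec_mulVec, hV, one_mulVec]
  have hcross : (P *ᵥ x) ⬝ᵥ (Pᵀ *ᵥ x) = 0 := by
    rw [dotProduct_mulVec_mulVec,
      show Pᵀ * Pᵀ = V * Cᵀ * (Wᵀ * V) * Cᵀ * Wᵀ by simp [P, transpose_mul, Matrix.mul_assoc]]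
    simp [(by simpa using congrArg transpose hVW : Wᵀ * V = 0)]
  have hCt : ‖Cᵀ‖ = ‖C‖ := l2_opNorm_conjTranspose C
  calc ((P + Pᵀ) *ᵥ x) ⬝ᵥ ((P + Pᵀ) *ᵥ x)
      = (C *ᵥ a) ⬝ᵥ (C *ᵥ a) + (Cᵀ *ᵥ b) ⬝ᵥ (Cᵀ *ᵥ b) := by
        rw [add_mulVec, add_dotProduct, dotProduct_add, dotProduct_add, dotProduct_comm (Pᵀ *ᵥ x),
          hcross, hP, hPt]
        ring
    _ ≤ ‖C‖ ^ 2 * (a ⬝ᵥ a) + ‖C‖ ^ 2 * (b ⬝ᵥ b) := by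
        gcongr
        · exact mulVec_dotProduct_self_le_l2_opNorm_sq C a
        · simpa [hCt] using mulVec_dotProduct_self_le_l2_opNorm_sq Cᵀ b
    _ ≤ ‖C‖ ^ 2 * (x ⬝ᵥ x) := by
        rw [← mul_add]
        exact mul_le_mul_of_nonneg_left (mulVec_transpose_dotProduct_self_add_le hV hW hVW x)
          (sq_nonneg _)

end L2OpNorm

theorem integral_exp_mul_sub {κ : ℝ} (hκ : κ ≠ 0) (t₀ t : ℝ) :
    ∫ u in t₀..t, Real.exp (κ * (t - u)) = (Real.exp (κ * (t - t₀)) - 1) / κ := by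
  simp_rw [mul_sub]
  rw [intervalIntegral.integral_comp_sub_mul (fun x => Real.exp x) hκ, integral_exp, sub_self,
    Real.exp_zero, smul_eq_mul, inv_mul_eq_div]

section VariationOfConstants

variable {𝔸 : Type*} [NormedRing 𝔸] [NormedAlgebra ℝ 𝔸]

theorem norm_integral_exp_mul_mul_exp_le {a b : 𝔸} {R : ℝ → 𝔸} {α β c t₀ t : ℝ}
    (ha : ∀ s, 0 ≤ s → ‖NormedSpace.exp (s • a)‖ ≤ Real.exp (α * s))
    (hb : ∀ s, 0 ≤ s → ‖NormedSpace.exp (s • b)‖ ≤ Real.exp (β * s))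
    (hR : ∀ u ∈ Icc t₀ t, ‖R u‖ ≤ c) (hαβ : α + β ≠ 0) (ht : t₀ ≤ t) :
    ‖∫ u in t₀..t, NormedSpace.exp ((t - u) • a) * R u * NormedSpace.exp ((t - u) • b)‖ ≤
      c * ((Real.exp ((α + β) * (t - t₀)) - 1) / (α + β)) := by
  rw [← integral_exp_mul_sub hαβ, ← intervalIntegral.integral_const_mul]
  refine intervalIntegral.norm_integral_le_of_norm_le ht (Filter.Eventually.of_forall
    fun u hu => ?_) ((by fun_prop : Continuous fun u => c * Real.exp ((α + β) * (t - u)))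
      |>.intervalIntegrable _ _)
  have hu' : u ∈ Icc t₀ t := Ioc_subset_Icc_self hu
  have htu : 0 ≤ t - u := sub_nonneg.2 hu.2
  calc ‖NormedSpace.exp ((t - u) • a) * R u * NormedSpace.exp ((t - u) • b)‖
      ≤ ‖NormedSpace.exp ((t - u) • a)‖ * ‖R u‖ * ‖NormedSpace.exp ((t - u) • b)‖ :=
        norm_mul₃_le
    _ ≤ Real.exp (α * (t - u)) * c * Real.exp (β * (t - u)) := by
        have hc : 0 ≤ c := (norm_nonneg _).trans (hR u hu')
        gcongr
        exacts [ha _ htu, hR u hu', hb _ htu]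
    _ = c * Real.exp ((α + β) * (t - u)) := by
        rw [add_mul, Real.exp_add]; ring

variable [CompleteSpace 𝔸]

theorem hasDerivAt_exp_sub_smul (a : 𝔸) (t u : ℝ) :
    HasDerivAt (fun v : ℝ => NormedSpace.exp ((t - v) • a))
      (-(NormedSpace.exp ((t - u) • a) * a)) u := by
  refine ((hasDerivAt_exp_smul_const a (t - u)).scomp u
    ((hasDerivAt_id u).const_sub t)).congr_deriv ?_
  simp

theorem hasDerivAt_exp_sub_smul' (a : 𝔸) (t u : ℝ) :
    HasDerivAt (fun v : ℝ => NormedSpace.exp ((t - v) • a))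
      (-(a * NormedSpace.exp ((t - u) • a))) u := by
  refine ((hasDerivAt_exp_smul_const' a (t - u)).scomp u
    ((hasDerivAt_id u).const_sub t)).congr_deriv ?_
  simp

theorem eq_exp_mul_mul_exp_add_integral {a b : 𝔸} {Z R : ℝ → 𝔸}
    (hZ : ∀ u, HasDerivAt Z (a * Z u + Z u * b + R u) u) (hR : Continuous R) (t₀ t : ℝ) :
    Z t = NormedSpace.exp ((t - t₀) • a) * Z t₀ * NormedSpace.exp ((t - t₀) • b) +
      ∫ u in t₀..t, NormedSpace.exp ((t - u) • a) * R u * NormedSpace.exp ((t - u) • b) := by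
  set p := fun u : ℝ => NormedSpace.exp ((t - u) • a)
  set r := fun u : ℝ => NormedSpace.exp ((t - u) • b)
  -- `p' = -p a` and `r' = -b r` cancel the terms `a Z` and `Z b` of `Z'`
  have hF : ∀ u, HasDerivAt (fun v => p v * Z v * r v) (p u * R u * r u) u := fun u => by
    refine (((hasDerivAt_exp_sub_smul a t u).mul (hZ u)).mul
      (hasDerivAt_exp_sub_smul' b t u)).congr_deriv ?_
    simp only [p, r, Pi.mul_apply, mul_add, add_mul, mul_neg, neg_mul, mul_assoc]
    abel
  have hcont : Continuous fun u => p u * R u * r u :=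
    ((continuous_iff_continuousAt.2 fun u => (hasDerivAt_exp_sub_smul a t u).continuousAt).mul
      hR).mul (continuous_iff_continuousAt.2 fun u => (hasDerivAt_exp_sub_smul b t u).continuousAt)
  rw [intervalIntegral.integral_eq_sub_of_hasDerivAt (fun u _ => hF u)
    (hcont.intervalIntegrable _ _)]
  simp [p, r]

end VariationOfConstants

theorem HasDerivAt.matrix_const_mul_mul_const {m p q r : Type*} [Fintype m] [Fintype p]
    [Fintype q] [Fintype r] [DecidableEq q] [DecidableEq r] {G : ℝ → Matrix p q ℝ}
    {G' : Matrix p q ℝ} {u : ℝ} (hG : HasDerivAt G G' u) (L : Matrix m p ℝ) (R : Matrix q r ℝ) :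
    HasDerivAt (fun v => L * G v * R) (L * G' * R) u :=
  (LinearMap.toContinuousLinearMap ((mulRightLinearMap m ℝ R).comp
    (mulLeftLinearMap q ℝ L))).hasFDerivAt.comp_hasDerivAt u hG

section Krylov

variable {n q d s : Type*} [Fintype n] [Fintype q] [Fintype d] [Fintype s]
  {A : Matrix n n ℝ} {V : Matrix n q ℝ} {Vp : Matrix n d ℝ} {T : Matrix q q ℝ}
  {Tp : Matrix d d ℝ} {E : Matrix q d ℝ}

theorem arnoldi_lyapunov_residual (hArnoldi : A * V = V * T + Vp * Tp * Eᵀ)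
    {G : Matrix q q ℝ} (hG : Gᵀ = G) (Bm : Matrix q s ℝ) :
    A * (V * G * Vᵀ) + V * G * Vᵀ * Aᵀ + V * Bm * (V * Bm)ᵀ =
      V * (T * G + G * Tᵀ + Bm * Bmᵀ) * Vᵀ +
        (Vp * (Tp * (Eᵀ * G)) * Vᵀ + (Vp * (Tp * (Eᵀ * G)) * Vᵀ)ᵀ) := by
  have hAt : V * G * Vᵀ * Aᵀ = V * G * (A * V)ᵀ := by
    rw [transpose_mul, Matrix.mul_assoc]
  rw [← Matrix.mul_assoc A, ← Matrix.mul_assoc A, hAt, hArnoldi]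
  simp only [transpose_add, transpose_mul, transpose_transpose, hG, Matrix.mul_add,
    Matrix.add_mul, Matrix.mul_assoc]
  abel

theorem hasDerivAt_krylov_error [DecidableEq n] [DecidableEq q]
    (hArnoldi : A * V = V * T + Vp * Tp * Eᵀ) {Bm : Matrix q s ℝ} {X : ℝ → Matrix n n ℝ}
    {G : ℝ → Matrix q q ℝ} {u : ℝ} (hGsymm : (G u)ᵀ = G u)
    (hX : HasDerivAt X (A * X u + X u * Aᵀ + V * Bm * (V * Bm)ᵀ) u)
    (hG : HasDerivAt G (T * G u + G u * Tᵀ + Bm * Bmᵀ) u) :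
    HasDerivAt (fun v => X v - V * G v * Vᵀ)
      (A * (X u - V * G u * Vᵀ) + (X u - V * G u * Vᵀ) * Aᵀ +
        (Vp * (Tp * (Eᵀ * G u)) * Vᵀ + (Vp * (Tp * (Eᵀ * G u)) * Vᵀ)ᵀ)) u := by
  have hres := arnoldi_lyapunov_residual hArnoldi hGsymm Bm
  refine (hX.sub (hG.matrix_const_mul_mul_const V Vᵀ)).congr_deriv ?_
  rw [Matrix.mul_sub, Matrix.sub_mul, ← sub_eq_zero, ← sub_eq_zero.2 hres]
  abel

end Krylov

theorem error_bound_stable_general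
    (n s q d : ℕ)
    (t₀ Tf : ℝ)
    (A : Matrix (Fin n) (Fin n) ℝ) (hstab : mu2 A < 0)
    (B : Matrix (Fin n) (Fin s) ℝ)
    (V : Matrix (Fin n) (Fin q) ℝ) (Vp : Matrix (Fin n) (Fin d) ℝ)
    (hV : Vᵀ * V = 1) (hVp : Vpᵀ * Vp = 1) (hVVp : Vᵀ * Vp = 0)
    (T : Matrix (Fin q) (Fin q) ℝ)
    (Tp : Matrix (Fin d) (Fin d) ℝ)
    (E : Matrix (Fin q) (Fin d) ℝ)
    (hArnoldi : A * V = V * T + Vp * Tp * Eᵀ)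
    (Bm : Matrix (Fin q) (Fin s) ℝ) (hB : B = V * Bm)
    (G : ℝ → Matrix (Fin q) (Fin q) ℝ)
    (hGsymm : ∀ t, (G t)ᵀ = G t)
    (hG : ∀ t, HasDerivAt G (T * G t + G t * Tᵀ + Bm * Bmᵀ) t)
    (hG0 : G t₀ = 0)
    (Xm : ℝ → Matrix (Fin n) (Fin n) ℝ) (hXm : ∀ t, Xm t = V * G t * Vᵀ)
    (X : ℝ → Matrix (Fin n) (Fin n) ℝ)
    (hX : ∀ t, HasDerivAt X (A * X t + X t * Aᵀ + B * Bᵀ) t)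
    (hX0 : X t₀ = 0) :
    ∀ t ∈ Icc t₀ Tf,
      ‖X t - Xm t‖ ≤
        ‖Tp‖ * (⨆ τ : Icc t₀ t, ‖Eᵀ * G (τ : ℝ)‖) *
          ((Real.exp (2 * (t - t₀) * mu2 A) - 1) / (2 * mu2 A)) := by
  rintro t ⟨ht₀, -⟩
  subst hB
  obtain rfl : Xm = fun u => V * G u * Vᵀ := funext hXm
  have hGc : Continuous G := continuous_iff_continuousAt.2 fun u => (hG u).continuousAt
  set R := fun u => Vp * (Tp * (Eᵀ * G u)) * Vᵀ + (Vp * (Tp * (Eᵀ * G u)) * Vᵀ)ᵀ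
  have hRc : Continuous R := by unfold R; fun_prop
  have hbdd : BddAbove (range fun τ : Icc t₀ t => ‖Eᵀ * G τ‖) :=
    (isCompact_range (by fun_prop)).bddAbove
  have hK : ∀ u ∈ Icc t₀ t, ‖Eᵀ * G u‖ ≤ ⨆ τ : Icc t₀ t, ‖Eᵀ * G (τ : ℝ)‖ := fun u hu =>
    le_ciSup hbdd ⟨u, hu⟩
  have hR : ∀ u ∈ Icc t₀ t, ‖R u‖ ≤ ‖Tp‖ * ⨆ τ : Icc t₀ t, ‖Eᵀ * G (τ : ℝ)‖ := fun u hu =>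
    (l2_opNorm_add_transpose_le hV hVp hVVp _).trans
      ((l2_opNorm_mul _ _).trans (by gcongr; exact hK u hu))
  have hexp : ∀ s, 0 ≤ s → ‖NormedSpace.exp (s • A)‖ ≤ Real.exp (mu2 A * s) := fun _ =>
    norm_exp_smul_le (dotProduct_mulVec_le_mu2 A)
  have hexpT : ∀ s, 0 ≤ s → ‖NormedSpace.exp (s • Aᵀ)‖ ≤ Real.exp (mu2 A * s) := fun _ =>
    norm_exp_smul_le fun x => (dotProduct_transpose_mulVec A x x).trans_le
      (dotProduct_mulVec_le_mu2 A x)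
  rw [eq_exp_mul_mul_exp_add_integral
    (fun u => hasDerivAt_krylov_error hArnoldi (hGsymm u) (hX u) (hG u)) hRc t₀ t]
  simp only [hX0, hG0, Matrix.mul_zero, Matrix.zero_mul, sub_zero, zero_add]
  rw [show 2 * (t - t₀) * mu2 A = (mu2 A + mu2 A) * (t - t₀) by ring, two_mul (mu2 A)]
  exact norm_integral_exp_mul_mul_exp_le hexp hexpT hR (by linarith) ht₀

/-- Error bound for the Krylov approximation of the differential Lyapunov
equation when `A` is stable (`μ₂(A) < 0`):
`‖X(t) − X_m(t)‖ ≤ ‖T₊‖ · sup_{τ∈[t₀,t]} ‖Ḡ(τ)‖ · (e^{2(t−t₀)μ₂(A)} − 1)/(2 μ₂(A))`,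
where `Ḡ(τ) = Eᵀ G(τ)` and the norm is the spectral norm. -/
theorem error_bound_stable
    (n s q d : ℕ) (hn : 0 < n) (hs : 0 < s) (hq : 0 < q) (hd : 0 < d) (hdq : d ≤ q)
    (t₀ Tf : ℝ) (ht : t₀ ≤ Tf)
    (A : Matrix (Fin n) (Fin n) ℝ) (hstab : mu2 A < 0)
    (B : Matrix (Fin n) (Fin s) ℝ)
    (V : Matrix (Fin n) (Fin q) ℝ) (Vp : Matrix (Fin n) (Fin d) ℝ)
    (hV : Vᵀ * V = 1) (hVp : Vpᵀ * Vp = 1) (hVVp : Vᵀ * Vp = 0)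
    (T : Matrix (Fin q) (Fin q) ℝ) (hT : T = Vᵀ * A * V)
    (Tp : Matrix (Fin d) (Fin d) ℝ)
    (E : Matrix (Fin q) (Fin d) ℝ)
    (hE : ∀ i j, E i j = if (i : ℕ) = q - d + (j : ℕ) then 1 else 0)
    (hArnoldi : A * V = V * T + Vp * Tp * Eᵀ)
    (Bm : Matrix (Fin q) (Fin s) ℝ) (hBm : Bm = Vᵀ * B) (hB : B = V * Bm)
    (G : ℝ → Matrix (Fin q) (Fin q) ℝ)
    (hGsymm : ∀ t, (G t)ᵀ = G t)
    (hG : ∀ t, HasDerivAt G (T * G t + G t * Tᵀ + Bm * Bmᵀ) t)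
    (hG0 : G t₀ = 0)
    (Xm : ℝ → Matrix (Fin n) (Fin n) ℝ) (hXm : ∀ t, Xm t = V * G t * Vᵀ)
    (X : ℝ → Matrix (Fin n) (Fin n) ℝ)
    (hX : ∀ t, HasDerivAt X (A * X t + X t * Aᵀ + B * Bᵀ) t)
    (hX0 : X t₀ = 0) :
    ∀ t ∈ Icc t₀ Tf,
      ‖X t - Xm t‖ ≤
        ‖Tp‖ * (⨆ τ : Icc t₀ t, ‖Eᵀ * G (τ : ℝ)‖) *
          ((Real.exp (2 * (t - t₀) * mu2 A) - 1) / (2 * mu2 A)) :=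
  error_bound_stable_general n s q d t₀ Tf A hstab B V Vp hV hVp hVVp T Tp E hArnoldi Bm hB G hGsymm
    hG hG0 Xm hXm X hX hX0
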